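/- Suppose the gains K̄_χ ∈ ℝ^{m×n} (χ ∈ X̄) satisfy the constraint K̄_{(α,β,γ,δ)} = K̄_{(α',β',γ,δ)} for all α, α' ∈ {1,…,N}, β, β' ∈ {1,…,M}, γ ∈ {1,…,N}, δ ∈ {1,…,T}, and suppose there exist C > 0 and ε ∈ [0,1) such that for every time-homogeneous Markov chain θ on X̄ with transition matrix p̄ and any deterministic initial state θ(0) = χ₀ ∈ X̄, and every x̄₀ ∈ ℝⁿ, the solution of x̄(k+1) = (A_{α(θ(k))} + B_{α(θ(k))} K̄_{θ(k)}) x̄(k), x̄(0) = x̄₀, where α(χ) denotes the first component of χ ∈ X̄, satisfies E[‖x̄(k)‖²] ≤ C ε^k ‖x̄₀‖² for all k ∈ ℕ. Define K_{γ,δ} = K̄_{(1,1,γ,δ)} for γ ∈ {1,…,N}, δ ∈ {1,…,T}. Then the gains K stabilize (Σ, 𝒯_{s,Λ}). -/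

import Mathlib

/-!
The extended process `r̄(k) = (r(k), s(k), σ(k), ⌊k+1−τ(k)⌋_T)` is a function of the history of
`(r, s)` up to time `k`, and `r̄(k+1)` is obtained from `r̄(k)` and `(r(k+1), s(k+1))` alone by the
update encoded in `p̄`. Hence `r̄` is a Markov chain with transition matrix `p̄` and deterministic
initial state. Since `K̄` ignores its first two arguments, the closed loop driven by `K` is the
system driven by `K̄` along `r̄`, to which the assumed bound applies.

Conditional probabilities of events that need not be measurable are ratios of outer measures;
they behave additively on the history cylinders because these are null-measurable.
-/

open MeasureTheory ProbabilityTheory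

/-- `flT T k : Fin T` represents `⌊k⌋_T`, the unique element of `{1,…,T}` such that
`k − ⌊k⌋_T` is divisible by `T`; the element `d : Fin T` encodes the value `d.val + 1`. -/
def flT (T : ℕ) [NeZero T] (k : ℤ) : Fin T :=
  ⟨((k - 1) % (T : ℤ)).toNat, by
    have hT : (0:ℤ) < (T:ℤ) := by exact_mod_cast Nat.pos_of_ne_zero (NeZero.ne T)
    have h1 : 0 ≤ (k - 1) % (T:ℤ) := Int.emod_nonneg _ (ne_of_gt hT)
    have h2 : (k - 1) % (T:ℤ) < (T:ℤ) := Int.emod_lt_of_pos _ hT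
    omega⟩

/-- `τ(k)`: the most recent observation time `≤ k`, i.e. the largest `j ≤ k` with
`s j ∈ Λ`, and `τ₀` if no observation has occurred yet. -/
noncomputable def tauProc {M : ℕ} {Ω : Type*} (Λ : Set (Fin M)) (s : ℕ → Ω → Fin M)
    (τ0 : ℤ) (k : ℕ) (ω : Ω) : ℤ := by
  classical
  exact if ∃ j ≤ k, s j ω ∈ Λ then
    ((Nat.findGreatest (fun j => s j ω ∈ Λ) k : ℕ) : ℤ) else τ0

/-- `σ(k) = r(τ(k))` for `k ≥ t₀` and `σ₀` before the first observation. -/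
noncomputable def sigmaProc {N M : ℕ} {Ω : Type*} (Λ : Set (Fin M))
    (r : ℕ → Ω → Fin N) (s : ℕ → Ω → Fin M) (σ0 : Fin N) (k : ℕ) (ω : Ω) : Fin N := by
  classical
  exact if ∃ j ≤ k, s j ω ∈ Λ then r (Nat.findGreatest (fun j => s j ω ∈ Λ) k) ω else σ0

/-- The extended process `r̄(k) = (r(k), s(k), σ(k), ⌊k+1−τ(k)⌋_T)`. -/
noncomputable def rbar {N M : ℕ} (T : ℕ) [NeZero T] {Ω : Type*} (Λ : Set (Fin M))
    (r : ℕ → Ω → Fin N) (s : ℕ → Ω → Fin M) (τ0 : ℤ) (σ0 : Fin N) (k : ℕ) (ω : Ω) :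
    Fin N × Fin M × Fin N × Fin T :=
  (r k ω, s k ω, sigmaProc Λ r s σ0 k ω, flT T ((k : ℤ) + 1 - tauProc Λ s τ0 k ω))

/-- The transition matrix `p̄` on `X̄ = {1,…,N} × {1,…,M} × {1,…,N} × {1,…,T}`.
Recall that `δ : Fin T` encodes the value `δ.val + 1`, so `flT T 1 = 0` encodes the
value `1` and `δ + 1` (cyclic `Fin` addition) encodes `⌊δ + 1⌋_T`. -/
noncomputable def pbar {N M T : ℕ} [NeZero T] (P : Matrix (Fin N) (Fin N) ℝ)
    (Q : Matrix (Fin M) (Fin M) ℝ) (Λ : Set (Fin M))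
    (χ χ' : Fin N × Fin M × Fin N × Fin T) : ℝ := by
  classical
  exact
    if χ'.2.1 ∈ Λ then
      if χ'.1 = χ'.2.2.1 ∧ χ'.2.2.2 = flT T 1 then P χ.1 χ'.1 * Q χ.2.1 χ'.2.1 else 0
    else
      if χ'.2.2.1 = χ.2.2.1 ∧ χ'.2.2.2 = χ.2.2.2 + 1 then P χ.1 χ'.1 * Q χ.2.1 χ'.2.1 else 0

/-- A row-stochastic matrix. -/
def RowStochastic {I : Type*} [Fintype I] (P : I → I → ℝ) : Prop :=
  (∀ i j, 0 ≤ P i j) ∧ ∀ i, ∑ j, P i j = 1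

/-- The pair `(r, s)` is a time-homogeneous Markov chain with product transition
probabilities `P ⊗ Q`: conditional on any history of positive probability. -/
def IsPairMarkov {N M : ℕ} {Ω : Type*} [MeasurableSpace Ω] (μ : Measure Ω)
    (r : ℕ → Ω → Fin N) (s : ℕ → Ω → Fin M)
    (P : Matrix (Fin N) (Fin N) ℝ) (Q : Matrix (Fin M) (Fin M) ℝ) : Prop :=
  ∀ (k : ℕ) (a : ℕ → Fin N) (b : ℕ → Fin M),
    μ {ω | ∀ j ≤ k, r j ω = a j ∧ s j ω = b j} ≠ 0 →
    ∀ (α' : Fin N) (β' : Fin M),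
      ProbabilityTheory.cond μ {ω | ∀ j ≤ k, r j ω = a j ∧ s j ω = b j}
          {ω | r (k+1) ω = α' ∧ s (k+1) ω = β'}
        = ENNReal.ofReal (P (a k) α' * Q (b k) β')

/-- A time-homogeneous Markov chain on a (finite) state space `S` with transition
matrix `P`. -/
def IsMarkov {S : Type*} {Ω : Type*} [MeasurableSpace Ω] (μ : Measure Ω)
    (X : ℕ → Ω → S) (P : S → S → ℝ) : Prop :=
  ∀ (k : ℕ) (c : ℕ → S),
    μ {ω | ∀ i ≤ k, X i ω = c i} ≠ 0 →
    ∀ j : S,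
      ProbabilityTheory.cond μ {ω | ∀ i ≤ k, X i ω = c i} {ω | X (k+1) ω = j}
        = ENNReal.ofReal (P (c k) j)

/-- The gains `K` stabilize `(Σ, 𝒯_{s,Λ})` (with the initial state `s₀` of the
observation chain restricted to `S0`): there are `C > 0` and `ε ∈ [0,1)` such that
`E[‖x(k)‖²] ≤ C ε^k ‖x₀‖²` for every realization of the closed loop, every initial
condition `x₀, r₀, s₀ ∈ S0, τ₀ < 0, σ₀` and every `k`. -/
def StabilizesOn {n m N M T : ℕ} [NeZero T]
    (A : Fin N → Matrix (Fin n) (Fin n) ℝ) (B : Fin N → Matrix (Fin n) (Fin m) ℝ)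
    (P : Matrix (Fin N) (Fin N) ℝ) (Q : Matrix (Fin M) (Fin M) ℝ)
    (Λ : Set (Fin M)) (S0 : Set (Fin M))
    (K : Fin N → Fin T → Matrix (Fin m) (Fin n) ℝ) : Prop :=
  ∃ C > (0:ℝ), ∃ ε ∈ Set.Ico (0:ℝ) 1,
    ∀ (Ω : Type) [MeasurableSpace Ω] (μ : Measure Ω), IsProbabilityMeasure μ →
    ∀ (r : ℕ → Ω → Fin N) (s : ℕ → Ω → Fin M) (r₀ : Fin N) (s₀ : Fin M),
      s₀ ∈ S0 → (∀ ω, r 0 ω = r₀) → (∀ ω, s 0 ω = s₀) →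
      IsPairMarkov μ r s P Q →
      μ {ω | {k : ℕ | s k ω ∈ Λ}.Infinite} = 1 →
      ∀ τ₀ : ℤ, τ₀ < 0 → ∀ (σ₀ : Fin N) (x₀ : EuclideanSpace ℝ (Fin n))
        (x : ℕ → Ω → EuclideanSpace ℝ (Fin n)),
        (∀ ω, x 0 ω = x₀) →
        (∀ (k : ℕ) (ω : Ω), x (k+1) ω =
          Matrix.toEuclideanLin (A (r k ω) + B (r k ω) * K (sigmaProc Λ r s σ₀ k ω)
            (flT T ((k : ℤ) + 1 - tauProc Λ s τ₀ k ω))) (x k ω)) →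
        ∀ k : ℕ, ∫ ω, ‖x k ω‖^2 ∂μ ≤ C * ε^k * ‖x₀‖^2

namespace MeasureTheory

variable {Ω : Type*} [MeasurableSpace Ω] {ν : Measure Ω} [IsFiniteMeasure ν]

theorem nullMeasurableSet_of_measure_add_measure_compl_le {s : Set Ω}
    (h : ν s + ν sᶜ ≤ ν Set.univ) : NullMeasurableSet s ν := by
  set H := toMeasurable ν s
  set H' := toMeasurable ν sᶜ
  have hcover : H ∪ H' = Set.univ :=
    Set.eq_univ_of_forall fun ω => (em (ω ∈ s)).imp (subset_toMeasurable ν s ·)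
      (subset_toMeasurable ν sᶜ ·)
  have hoverlap : ν (H ∩ H') = 0 := by
    have hadd := measure_union_add_inter (μ := ν) H (measurableSet_toMeasurable ν sᶜ)
    rw [measure_toMeasurable, measure_toMeasurable, hcover] at hadd
    have : ν Set.univ + ν (H ∩ H') ≤ ν Set.univ + 0 := by rw [hadd, add_zero]; exact h
    exact nonpos_iff_eq_zero.1 ((ENNReal.add_le_add_iff_left (measure_ne_top ν _)).1 this)
  have hHs : H ≤ᵐ[ν] s := ae_le_set.2 <| measure_mono_null
    (show H \ s ⊆ H ∩ H' from fun _ hω => ⟨hω.1, subset_toMeasurable ν sᶜ hω.2⟩) hoverlap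
  exact (measurableSet_toMeasurable ν s).nullMeasurableSet.congr
    (hHs.antisymm (subset_toMeasurable ν s).eventuallyLE)

theorem nullMeasurableSet_preimage_singleton_of_sum_le {ι : Type*} [Fintype ι]
    (f : Ω → ι) (h : ∑ i, ν (f ⁻¹' {i}) ≤ ν Set.univ) (i : ι) :
    NullMeasurableSet (f ⁻¹' {i}) ν := by
  classical
  refine nullMeasurableSet_of_measure_add_measure_compl_le (le_trans ?_ h)
  rw [← Finset.add_sum_erase _ _ (Finset.mem_univ i)]
  gcongr
  refine (measure_mono fun ω hω => ?_).trans (measure_biUnion_finset_le _ _)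
  exact Set.mem_iUnion₂.2
    ⟨f ω, Finset.mem_erase.2 ⟨fun hi => hω (hi ▸ rfl), Finset.mem_univ _⟩, rfl⟩

end MeasureTheory

namespace ProbabilityTheory

open MeasureTheory

variable {Ω : Type*} [MeasurableSpace Ω] {μ : Measure Ω} {s : Set Ω}

theorem cond_apply₀ (hs : NullMeasurableSet s μ) (t : Set Ω) :
    μ[t | s] = (μ s)⁻¹ * μ (s ∩ t) := by
  rw [cond, Measure.smul_apply, Measure.restrict_apply₀' hs, Set.inter_comm, smul_eq_mul]

theorem _root_.MeasureTheory.NullMeasurableSet.inter_of_cond (hs : NullMeasurableSet s μ)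
    (hfin : μ s ≠ ⊤) {t : Set Ω} (ht : NullMeasurableSet t μ[|s]) : NullMeasurableSet (t ∩ s) μ :=
  (nullMeasurableSet_restrict hs).1 <|
    (nullMeasurableSet_smul_measure_iff (ENNReal.inv_ne_zero.2 hfin)).1 ht

end ProbabilityTheory

open scoped Kronecker

theorem RowStochastic.kronecker {I J : Type*} [Fintype I] [Fintype J] {P : Matrix I I ℝ}
    {Q : Matrix J J ℝ} (hP : RowStochastic P) (hQ : RowStochastic Q) :
    RowStochastic (P ⊗ₖ Q) := by
  refine ⟨fun _ _ => mul_nonneg (hP.1 _ _) (hQ.1 _ _), fun u => ?_⟩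
  simp only [Matrix.kroneckerMap_apply, Fintype.sum_prod_type,
    ← Finset.mul_sum, hQ.2, mul_one, hP.2]

theorem IsPairMarkov.isMarkov_prod {N M : ℕ} {Ω : Type*} [MeasurableSpace Ω] {μ : Measure Ω}
    {r : ℕ → Ω → Fin N} {s : ℕ → Ω → Fin M} {P : Matrix (Fin N) (Fin N) ℝ}
    {Q : Matrix (Fin M) (Fin M) ℝ} (h : IsPairMarkov μ r s P Q) :
    IsMarkov μ (fun k ω => (r k ω, s k ω)) (P ⊗ₖ Q) := by
  intro k c hc v
  simpa [Prod.ext_iff, Matrix.kronecker_apply] using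
    h k (fun j => (c j).1) (fun j => (c j).2) (by simpa [Prod.ext_iff] using hc) v.1 v.2

/-- At each step the fibres of the next state split the current cylinder into pieces whose
outer measures add up to its measure. -/
theorem IsMarkov.nullMeasurableSet_cylinder {S Ω : Type*} [Fintype S]
    [MeasurableSpace Ω] {μ : Measure Ω} [IsFiniteMeasure μ] {X : ℕ → Ω → S} {p : S → S → ℝ}
    (hX : IsMarkov μ X p) (hp : RowStochastic p) (h0 : ∀ ω ω', X 0 ω = X 0 ω')
    (c : ℕ → S) : ∀ k, NullMeasurableSet {ω | ∀ i ≤ k, X i ω = c i} μ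
  | 0 => by
    rcases Set.eq_empty_or_nonempty {ω | ∀ i ≤ 0, X i ω = c i} with h | ⟨ω₀, hω₀⟩
    · exact h ▸ MeasurableSet.empty.nullMeasurableSet
    · convert MeasurableSet.univ.nullMeasurableSet
      refine Set.eq_univ_of_forall fun ω i hi => ?_
      obtain rfl := Nat.le_zero.1 hi
      exact (h0 ω ω₀).trans (hω₀ 0 le_rfl)
  | k + 1 => by
    set E := {ω | ∀ i ≤ k, X i ω = c i}
    have hE := IsMarkov.nullMeasurableSet_cylinder hX hp h0 c k
    have hsucc : {ω | ∀ i ≤ k + 1, X i ω = c i} = X (k + 1) ⁻¹' {c (k + 1)} ∩ E := by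
      ext ω
      simp only [Set.mem_ofPred_eq, Set.mem_inter_iff, Set.mem_preimage, Set.mem_singleton_iff,
        Nat.le_succ_iff, or_imp, forall_and, forall_eq, E]
      exact and_comm
    rw [hsucc]
    by_cases hE0 : μ E = 0
    · exact NullMeasurableSet.of_null (measure_mono_null Set.inter_subset_right hE0)
    have := cond_isProbabilityMeasure (μ := μ) hE0
    refine hE.inter_of_cond (measure_ne_top μ E) <|
      nullMeasurableSet_preimage_singleton_of_sum_le _ (le_of_eq ?_) _
    calc ∑ v, μ[X (k + 1) ⁻¹' {v} | E] = ∑ v, ENNReal.ofReal (p (c k) v) :=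
          Finset.sum_congr rfl fun v _ => hX k c hE0 v
      _ = μ[Set.univ | E] := by
          rw [← ENNReal.ofReal_sum_of_nonneg fun v _ => hp.1 _ v, hp.2, ENNReal.ofReal_one,
            measure_univ]

theorem flT_add_one (T : ℕ) [NeZero T] (z : ℤ) : flT T (z + 1) = flT T z + 1 := by
  have hT : (0 : ℤ) < T := by exact_mod_cast NeZero.pos T
  have hval : ∀ k, ((flT T k : ℕ) : ℤ) = (k - 1) % T := fun k =>
    Int.toNat_of_nonneg (Int.emod_nonneg _ hT.ne')
  apply Fin.ext
  apply Nat.cast_injective (R := ℤ)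
  rw [Fin.val_add, Fin.val_one']
  push_cast
  rw [hval, hval, Int.emod_add_emod, Int.add_emod_emod, add_sub_cancel_right, sub_add_cancel]

theorem exists_le_succ_iff_of_not {p : ℕ → Prop} {k : ℕ} (h : ¬ p (k + 1)) :
    (∃ j ≤ k + 1, p j) ↔ ∃ j ≤ k, p j :=
  ⟨fun ⟨j, hj, hp⟩ => ⟨j, (Nat.le_succ_iff.1 hj).resolve_right (by rintro rfl; exact h hp), hp⟩,
    fun ⟨j, hj, hp⟩ => ⟨j, hj.trans k.le_succ, hp⟩⟩

open Classical in
noncomputable def rbarStep {N M : ℕ} (T : ℕ) [NeZero T] (Λ : Set (Fin M))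
    (χ : Fin N × Fin M × Fin N × Fin T) (α : Fin N) (β : Fin M) :
    Fin N × Fin M × Fin N × Fin T :=
  if β ∈ Λ then (α, β, α, flT T 1) else (α, β, χ.2.2.1, χ.2.2.2 + 1)

section ExtendedChain

variable {N M : ℕ} {T : ℕ} [NeZero T] {Ω : Type*} {Λ : Set (Fin M)}
  {r : ℕ → Ω → Fin N} {s : ℕ → Ω → Fin M} {τ₀ : ℤ} {σ₀ : Fin N}

open Classical in
theorem tauProc_succ (k : ℕ) (ω : Ω) :
    tauProc Λ s τ₀ (k + 1) ω =
      if s (k + 1) ω ∈ Λ then ((k + 1 : ℕ) : ℤ) else tauProc Λ s τ₀ k ω := by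
  by_cases h : s (k + 1) ω ∈ Λ
  · rw [tauProc, if_pos ⟨k + 1, le_rfl, h⟩, Nat.findGreatest_succ, if_pos h, if_pos h]
  · simp [tauProc, h, exists_le_succ_iff_of_not (p := fun j => s j ω ∈ Λ) h]

open Classical in
theorem sigmaProc_succ (k : ℕ) (ω : Ω) :
    sigmaProc Λ r s σ₀ (k + 1) ω =
      if s (k + 1) ω ∈ Λ then r (k + 1) ω else sigmaProc Λ r s σ₀ k ω := by
  by_cases h : s (k + 1) ω ∈ Λ
  · rw [sigmaProc, if_pos ⟨k + 1, le_rfl, h⟩, Nat.findGreatest_succ, if_pos h, if_pos h]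
  · simp [sigmaProc, h, exists_le_succ_iff_of_not (p := fun j => s j ω ∈ Λ) h]

theorem rbar_zero (ω : Ω) :
    rbar T Λ r s τ₀ σ₀ 0 ω = rbarStep T Λ (r 0 ω, s 0 ω, σ₀, flT T (-τ₀)) (r 0 ω) (s 0 ω) := by
  by_cases h : s 0 ω ∈ Λ
  · rw [rbar, rbarStep, tauProc, sigmaProc, if_pos h, if_pos ⟨0, le_rfl, h⟩,
      if_pos ⟨0, le_rfl, h⟩]
    simp
  · have hnone : ¬ ∃ j ≤ 0, s j ω ∈ Λ := fun ⟨_, hj, hΛ⟩ => h (Nat.le_zero.1 hj ▸ hΛ)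
    rw [rbar, rbarStep, tauProc, sigmaProc, if_neg h, if_neg hnone, if_neg hnone, ← flT_add_one]
    congr 4
    ring

theorem rbar_succ (k : ℕ) (ω : Ω) :
    rbar T Λ r s τ₀ σ₀ (k + 1) ω =
      rbarStep T Λ (rbar T Λ r s τ₀ σ₀ k ω) (r (k + 1) ω) (s (k + 1) ω) := by
  rw [rbar, rbar, rbarStep, tauProc_succ, sigmaProc_succ]
  split_ifs
  · congr 4
    push_cast
    ring
  · rw [← flT_add_one]
    congr 4
    push_cast
    ring

theorem rbar_eq_of_agree {k : ℕ} {ω ω' : Ω} (h : ∀ j ≤ k, r j ω = r j ω' ∧ s j ω = s j ω') :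
    rbar T Λ r s τ₀ σ₀ k ω = rbar T Λ r s τ₀ σ₀ k ω' := by
  induction k with
  | zero => rw [rbar_zero, rbar_zero, (h 0 le_rfl).1, (h 0 le_rfl).2]
  | succ k ih =>
    rw [rbar_succ, rbar_succ, ih fun j hj => h j (hj.trans k.le_succ), (h (k + 1) le_rfl).1,
      (h (k + 1) le_rfl).2]

theorem rbarStep_eq_iff {χ χ' : Fin N × Fin M × Fin N × Fin T} {α : Fin N} {β : Fin M} :
    rbarStep T Λ χ α β = χ' ↔ (α, β) = (χ'.1, χ'.2.1) ∧ rbarStep T Λ χ χ'.1 χ'.2.1 = χ' := by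
  refine ⟨fun h => ?_, fun ⟨hαβ, h⟩ => ?_⟩
  · have hαβ : α = χ'.1 ∧ β = χ'.2.1 := by
      subst h; unfold rbarStep; split_ifs <;> exact ⟨rfl, rfl⟩
    rw [← hαβ.1, ← hαβ.2]
    exact ⟨rfl, h⟩
  · obtain ⟨rfl, rfl⟩ := Prod.mk.inj hαβ
    exact h

theorem pbar_eq_ite (P : Matrix (Fin N) (Fin N) ℝ) (Q : Matrix (Fin M) (Fin M) ℝ)
    (χ χ' : Fin N × Fin M × Fin N × Fin T) :
    pbar P Q Λ χ χ' =
      if rbarStep T Λ χ χ'.1 χ'.2.1 = χ' then P χ.1 χ'.1 * Q χ.2.1 χ'.2.1 else 0 := by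
  obtain ⟨α', β', γ', δ'⟩ := χ'
  by_cases h : β' ∈ Λ <;> simp [pbar, rbarStep, h, eq_comm]

theorem setOf_rbar_eq_of_nonempty {k : ℕ} {c : ℕ → Fin N × Fin M × Fin N × Fin T}
    (hne : {ω | ∀ i ≤ k, rbar T Λ r s τ₀ σ₀ i ω = c i}.Nonempty) :
    {ω | ∀ i ≤ k, rbar T Λ r s τ₀ σ₀ i ω = c i} =
      {ω | ∀ i ≤ k, (r i ω, s i ω) = ((c i).1, (c i).2.1)} := by
  obtain ⟨ω₀, hω₀⟩ := hne
  ext ω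
  refine ⟨fun h i hi => by rw [← h i hi]; rfl, fun h i hi => ?_⟩
  rw [← hω₀ i hi]
  refine rbar_eq_of_agree fun j hj => ?_
  have hj' := h j (hj.trans hi)
  rw [← hω₀ j (hj.trans hi)] at hj'
  exact Prod.mk.inj hj'

end ExtendedChain

theorem isMarkov_rbar {N M T : ℕ} [NeZero T] {Ω : Type*} [MeasurableSpace Ω] {μ : Measure Ω}
    [IsFiniteMeasure μ] {Λ : Set (Fin M)} {r : ℕ → Ω → Fin N} {s : ℕ → Ω → Fin M}
    {P : Matrix (Fin N) (Fin N) ℝ} {Q : Matrix (Fin M) (Fin M) ℝ} {r₀ : Fin N} {s₀ : Fin M}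
    (hP : RowStochastic P) (hQ : RowStochastic Q) (hpm : IsPairMarkov μ r s P Q)
    (hr0 : ∀ ω, r 0 ω = r₀) (hs0 : ∀ ω, s 0 ω = s₀) (τ₀ : ℤ) (σ₀ : Fin N) :
    IsMarkov μ (rbar T Λ r s τ₀ σ₀) (pbar P Q Λ) := by
  intro k c hE χ'
  set E := {ω | ∀ i ≤ k, rbar T Λ r s τ₀ σ₀ i ω = c i}
  have hY := hpm.isMarkov_prod
  have hEcyl : E = {ω | ∀ i ≤ k, (r i ω, s i ω) = ((c i).1, (c i).2.1)} :=
    setOf_rbar_eq_of_nonempty (nonempty_of_measure_ne_zero hE)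
  have hEnm : NullMeasurableSet E μ := hEcyl ▸
    hY.nullMeasurableSet_cylinder (hP.kronecker hQ) (fun ω ω' => by simp [hr0, hs0]) _ k
  have hnext : E ∩ {ω | rbar T Λ r s τ₀ σ₀ (k + 1) ω = χ'} =
      E ∩ if rbarStep T Λ (c k) χ'.1 χ'.2.1 = χ' then
        {ω | (r (k + 1) ω, s (k + 1) ω) = (χ'.1, χ'.2.1)} else ∅ := by
    ext ω
    refine and_congr_right fun hω => ?_
    rw [Set.mem_ofPred_eq, rbar_succ, hω k le_rfl, rbarStep_eq_iff]
    split_ifs with h <;> simp [h]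
  rw [cond_apply₀ hEnm, hnext, ← cond_apply₀ hEnm, pbar_eq_ite]
  split_ifs
  · rw [hEcyl] at hE ⊢
    exact hY k _ hE (χ'.1, χ'.2.1)
  · simp

/-- The states `1 ∈ {1,…,N}` and `1 ∈ {1,…,M}` are encoded as `0 : Fin N` and `0 : Fin M`. -/
theorem stabilization_via_extended_chain_general
    {n m N M T : ℕ} [NeZero N] [NeZero M] [NeZero T]
    (A : Fin N → Matrix (Fin n) (Fin n) ℝ) (B : Fin N → Matrix (Fin n) (Fin m) ℝ)
    (P : Matrix (Fin N) (Fin N) ℝ) (Q : Matrix (Fin M) (Fin M) ℝ)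
    (hP : RowStochastic P) (hQ : RowStochastic Q)
    (Λ : Set (Fin M))
    (Kbar : Fin N × Fin M × Fin N × Fin T → Matrix (Fin m) (Fin n) ℝ)
    (hconst : ∀ (α α' : Fin N) (β β' : Fin M) (γ : Fin N) (δ : Fin T),
      Kbar (α, β, γ, δ) = Kbar (α', β', γ, δ))
    (hstab : ∃ C > (0:ℝ), ∃ ε ∈ Set.Ico (0:ℝ) 1,
      ∀ (Ω : Type) [MeasurableSpace Ω] (μ : Measure Ω), IsProbabilityMeasure μ →
      ∀ θ : ℕ → Ω → Fin N × Fin M × Fin N × Fin T,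
        IsMarkov μ θ (pbar P Q Λ) → (∀ ω ω' : Ω, θ 0 ω = θ 0 ω') →
        ∀ (x₀ : EuclideanSpace ℝ (Fin n)) (x : ℕ → Ω → EuclideanSpace ℝ (Fin n)),
          (∀ ω, x 0 ω = x₀) →
          (∀ (k : ℕ) (ω : Ω), x (k+1) ω =
            Matrix.toEuclideanLin (A (θ k ω).1 + B (θ k ω).1 * Kbar (θ k ω)) (x k ω)) →
          ∀ k : ℕ, ∫ ω, ‖x k ω‖^2 ∂μ ≤ C * ε^k * ‖x₀‖^2) :
    StabilizesOn A B P Q Λ Set.univ (fun γ δ => Kbar (0, 0, γ, δ)) := by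
  obtain ⟨C, hC, ε, hε, hstab⟩ := hstab
  refine ⟨C, hC, ε, hε, fun Ω _ μ hμ r s r₀ s₀ _ hr0 hs0 hpm _ τ₀ _ σ₀ x₀ x hx0 hx => ?_⟩
  refine hstab Ω μ hμ _ (isMarkov_rbar hP hQ hpm hr0 hs0 τ₀ σ₀)
    (fun ω ω' => by rw [rbar_zero, rbar_zero, hr0, hr0, hs0, hs0]) x₀ x hx0 fun k ω => ?_
  simp only [hx k ω, hconst 0 (r k ω) 0 (s k ω)]
  rfl

/-- If the gains `K̄_χ` satisfy `K̄_{(α,β,γ,δ)} = K̄_{(α',β',γ,δ)}`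
and mean-square stabilize (uniformly, with constants `C > 0`, `ε ∈ [0,1)`) every
time-homogeneous Markov chain `θ` on `X̄` with transition matrix `p̄` and deterministic
initial state, driving the system `x̄(k+1) = (A_{α(θ(k))} + B_{α(θ(k))} K̄_{θ(k)}) x̄(k)`,
then the gains `K_{γ,δ} = K̄_{(1,1,γ,δ)}` stabilize `(Σ, 𝒯_{s,Λ})`.
(Here the state `1 ∈ {1,…,N}` is encoded as `0 : Fin N`, similarly for `Fin M`.) -/
theorem stabilization_via_extended_chain
    {n m N M T : ℕ} [NeZero n] [NeZero m] [NeZero N] [NeZero M] [NeZero T]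
    (A : Fin N → Matrix (Fin n) (Fin n) ℝ) (B : Fin N → Matrix (Fin n) (Fin m) ℝ)
    (P : Matrix (Fin N) (Fin N) ℝ) (Q : Matrix (Fin M) (Fin M) ℝ)
    (hP : RowStochastic P) (hQ : RowStochastic Q)
    (Λ : Set (Fin M)) (hΛ : Λ.Nonempty)
    (Kbar : Fin N × Fin M × Fin N × Fin T → Matrix (Fin m) (Fin n) ℝ)
    (hconst : ∀ (α α' : Fin N) (β β' : Fin M) (γ : Fin N) (δ : Fin T),
      Kbar (α, β, γ, δ) = Kbar (α', β', γ, δ))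
    (hstab : ∃ C > (0:ℝ), ∃ ε ∈ Set.Ico (0:ℝ) 1,
      ∀ (Ω : Type) [MeasurableSpace Ω] (μ : Measure Ω), IsProbabilityMeasure μ →
      ∀ θ : ℕ → Ω → Fin N × Fin M × Fin N × Fin T,
        IsMarkov μ θ (pbar P Q Λ) → (∀ ω ω' : Ω, θ 0 ω = θ 0 ω') →
        ∀ (x₀ : EuclideanSpace ℝ (Fin n)) (x : ℕ → Ω → EuclideanSpace ℝ (Fin n)),
          (∀ ω, x 0 ω = x₀) →
          (∀ (k : ℕ) (ω : Ω), x (k+1) ω =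
            Matrix.toEuclideanLin (A (θ k ω).1 + B (θ k ω).1 * Kbar (θ k ω)) (x k ω)) →
          ∀ k : ℕ, ∫ ω, ‖x k ω‖^2 ∂μ ≤ C * ε^k * ‖x₀‖^2) :
    StabilizesOn A B P Q Λ Set.univ (fun γ δ => Kbar (0, 0, γ, δ)) :=
  stabilization_via_extended_chain_general A B P Q hP hQ Λ Kbar hconst hstab
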